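/- arXiv:2010.07537 — 4 statements merged into one kernel-verified Lean document; each statement's English description precedes it below -/
import Mathlib

section
/- Let Γ be a group, let A be an abelian group, and let F be a finite group. Then the following are equivalent: (1) there exists a surjective group homomorphism Γ → A × F; (2) there exist a surjective group homomorphism φ : Γ → F and a group homomorphism f : Γ → A such that f maps ker(φ) onto A (i.e., f(ker φ) = A). -/
/-- For a group `Γ`, an abelian group `A` and a finite group `F`:
there exists a surjective homomorphism `Γ →* A × F` if and only if there exist a
surjective homomorphism `φ : Γ →* F` and a homomorphism `f : Γ →* A` mapping `ker φ`
onto `A`. -/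
theorem stmt_9 {Γ A F : Type*} [Group Γ] [CommGroup A] [Group F] [Finite F] :
    (∃ e : Γ →* A × F, Function.Surjective e) ↔
      (∃ φ : Γ →* F, Function.Surjective φ ∧ ∃ f : Γ →* A, φ.ker.map f = ⊤) := by
  constructor
  · rintro ⟨e, he⟩
    refine ⟨(MonoidHom.snd A F).comp e, fun x => ?_, (MonoidHom.fst A F).comp e, ?_⟩
    · obtain ⟨γ, hγ⟩ := he (1, x)
      exact ⟨γ, by simp [hγ]⟩
    · rw [Subgroup.eq_top_iff']
      intro a
      obtain ⟨γ, hγ⟩ := he (a, 1)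
      exact Subgroup.mem_map.mpr ⟨γ, by simp [MonoidHom.mem_ker, hγ], by simp [hγ]⟩
  · rintro ⟨φ, hφ, f, hf⟩
    refine ⟨MonoidHom.prod f φ, fun ⟨a, x⟩ => ?_⟩
    obtain ⟨γ, hγ⟩ := hφ x
    have : (f γ)⁻¹ * a ∈ φ.ker.map f := hf ▸ Subgroup.mem_top _
    obtain ⟨δ, hδ, hδf⟩ := Subgroup.mem_map.mp this
    refine ⟨γ * δ, ?_⟩
    have hδk : φ δ = 1 := hδ
    simp [MonoidHom.prod_apply, hδf, hγ, hδk, mul_inv_cancel_left]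
end

section
/- Let N ∈ ℕ with N ≥ 2 and let α₁, b₁, b₂, …, b_N ∈ ℤ be such that b_j ≠ 0 for some j ∈ {2, …, N} and gcd(α₁, b₁, b₂, …, b_N) = 1. Then there exists x ∈ ℤ with gcd(x·α₁ + b₁, b₂, …, b_N) = 1. -/
/-! With `n = gcd(b₂, …, b_N) ≠ 0`, it suffices that `x * α₁ + b₁` avoids every prime `p ∣ n`.
Modulo such `p`, the hypothesis says that `α₁` or `b₁` is nonzero. Taking for `x` the product of
the primes dividing `n` but not `b₁`, we get `x ≡ 0` exactly where `b₁ ≢ 0`, and `x ≢ 0` (forcing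
`α₁ ≢ 0`) exactly where `b₁ ≡ 0`; in both cases `x * α₁ + b₁ ≢ 0 (mod p)`. -/

open UniqueFactorizationMonoid

lemma Prime.dvd_prod_factors_filter_not_dvd_iff {R : Type*} [CommMonoidWithZero R]
    [UniqueFactorizationMonoid R] {n c p : R} (hn : n ≠ 0) (hp : Prime p)
    (hpn : p ∣ n) [DecidablePred fun q : R => ¬q ∣ c] :
    p ∣ ((factors n).filter fun q => ¬q ∣ c).prod ↔ ¬p ∣ c := by
  constructor
  · intro hpP
    obtain ⟨q, hq, hpq⟩ := hp.exists_mem_multiset_dvd hpP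
    rw [Multiset.mem_filter] at hq
    rw [(hp.associated_of_dvd (prime_of_factor q hq.1) hpq).dvd_iff_dvd_left]
    exact hq.2
  · intro hpc
    obtain ⟨q, hq, hpq⟩ := exists_mem_factors_of_dvd hn hp.irreducible hpn
    refine hpq.dvd.trans (Multiset.dvd_prod (Multiset.mem_filter.mpr ⟨hq, ?_⟩))
    rwa [← hpq.dvd_iff_dvd_left]

lemma exists_forall_prime_dvd_not_dvd_mul_add {R : Type*} [CommRing R] [IsDomain R]
    [UniqueFactorizationMonoid R] {a c n : R} (hn : n ≠ 0)
    (h : ∀ p : R, Prime p → p ∣ n → p ∣ a → ¬p ∣ c) :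
    ∃ x : R, ∀ p : R, Prime p → p ∣ n → ¬p ∣ x * a + c := by
  classical
  refine ⟨((factors n).filter fun q => ¬q ∣ c).prod, fun p hp hpn hpxac => ?_⟩
  have hx := hp.dvd_prod_factors_filter_not_dvd_iff hn hpn (c := c)
  by_cases hpc : p ∣ c
  · have hpxa : p ∣ _ * a := (dvd_add_left hpc).mp hpxac
    rcases hp.dvd_or_dvd hpxa with hpx | hpa
    · exact hx.mp hpx hpc
    · exact h p hp hpn hpa hpc
  · exact hpc ((dvd_add_right (dvd_mul_of_dvd_left (hx.mpr hpc) a)).mp hpxac)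

lemma Int.exists_gcd_mul_add_eq_one {a c n : ℤ} (hn : n ≠ 0)
    (h : GCDMonoid.gcd a (GCDMonoid.gcd c n) = 1) :
    ∃ x : ℤ, GCDMonoid.gcd (x * a + c) n = 1 := by
  have hprime : ∀ p : ℤ, Prime p → p ∣ n → p ∣ a → ¬p ∣ c := fun p hp hpn hpa hpc =>
    hp.not_isUnit (isUnit_of_dvd_one (h ▸ GCDMonoid.dvd_gcd hpa (GCDMonoid.dvd_gcd hpc hpn)))
  obtain ⟨x, hx⟩ := exists_forall_prime_dvd_not_dvd_mul_add hn hprime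
  refine ⟨x, ?_⟩
  have hcop : IsCoprime (x * a + c) n :=
    isCoprime_of_prime_dvd (fun h0 => hn h0.2) fun p hp hpxac hpn => hx p hp hpn hpxac
  rw [← Int.coe_gcd, Int.isCoprime_iff_gcd_eq_one.mp hcop, Nat.cast_one]

/-- Let `N ≥ 2`, `α₁, b₁, …, b_N ∈ ℤ` with `b_j ≠ 0` for some `j ∈ {2,…,N}` and
`gcd(α₁, b₁, …, b_N) = 1`.  Then there exists `x ∈ ℤ` with
`gcd(x·α₁ + b₁, b₂, …, b_N) = 1`.  Here `b : Fin N → ℤ` lists `b₁,…,b_N`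
(with `b ⟨0,_⟩ = b₁`), and the conclusion replaces the first entry by `x·α₁ + b₁`. -/
theorem stmt_10 (N : ℕ) (hN : 2 ≤ N) (α : ℤ) (b : Fin N → ℤ)
    (hb : ∃ j : Fin N, j ≠ (⟨0, by omega⟩ : Fin N) ∧ b j ≠ 0)
    (hgcd : gcd α (Finset.univ.gcd b) = 1) :
    ∃ x : ℤ,
      Finset.univ.gcd
        (Function.update b (⟨0, by omega⟩ : Fin N) (x * α + b ⟨0, by omega⟩)) = 1 := by
  set i₀ : Fin N := ⟨0, by omega⟩
  set rest := Finset.univ.erase i₀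
  have huniv : Finset.univ = insert i₀ rest := (Finset.insert_erase (Finset.mem_univ i₀)).symm
  have hrest : rest.gcd b ≠ 0 := fun h0 => by
    obtain ⟨j, hj, hbj⟩ := hb
    exact hbj (Finset.gcd_eq_zero_iff.mp h0 j (Finset.mem_erase.mpr ⟨hj, Finset.mem_univ j⟩))
  rw [huniv, Finset.gcd_insert] at hgcd
  obtain ⟨x, hx⟩ := Int.exists_gcd_mul_add_eq_one hrest hgcd
  refine ⟨x, ?_⟩
  rw [huniv, Finset.gcd_insert, Function.update_self,
    Finset.gcd_congr rfl fun j hj => Function.update_of_ne (Finset.ne_of_mem_erase hj) _ _]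
  exact hx
end

section
/- Let n, d ∈ ℕ and let α₁, …, α_n ∈ ℤ satisfy α₁ ∣ α₂, α₂ ∣ α₃, …, α_{n−1} ∣ α_n. Let N := Span_ℤ{α₁·e₁, …, α_n·e_n} ⊆ ℤ^n, where (e₁, …, e_n) is the standard basis. Then there exists a ℤ-linear map ψ : ℤ^n → ℤ^d with ψ(N) = ℤ^d if and only if d ≤ #{ i ∈ {1, …, n} : α_i = 1 or α_i = −1 }. -/
/-!
If `ψ(N) = ℤ^d`, pick a prime `p` dividing every non-unit `α_i`; by the divisibility chain a
prime factor of the first non-unit works. Modulo `p` the images `ψ(α_i e_i)` of the generators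
with `α_i` a non-unit vanish, so `(ℤ/p)^d` is spanned by at most `#{i : α_i = ±1}` vectors.
Conversely, projecting onto `d` coordinates `i` with `α_i = ±1` maps `N` onto `ℤ^d`.
-/

open Submodule Set

theorem dvd_of_le_of_forall_dvd_succ {M : Type*} [MonoidWithZero M] {n : ℕ} (α : Fin n → M)
    (hchain : ∀ (i : ℕ) (h : i + 1 < n), α ⟨i, Nat.lt_of_succ_lt h⟩ ∣ α ⟨i + 1, h⟩)
    {i j : Fin n} (hij : i ≤ j) : α i ∣ α j := by
  let f : ℕ → M := fun k => if h : k < n then α ⟨k, h⟩ else 0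
  have hf : ∀ k, f k ∣ f (k + 1) := fun k => by
    by_cases h : k + 1 < n
    · simpa [f, h, Nat.lt_of_succ_lt h] using hchain k h
    · simp [f, h]
  simpa [f] using Nat.rel_of_forall_rel_succ_of_le (· ∣ ·) hf (Fin.le_def.mp hij)

theorem Int.exists_prime_dvd_of_not_isUnit {ι : Type*} [LinearOrder ι] [WellFoundedLT ι]
    (α : ι → ℤ) (hα : ∀ i j, i ≤ j → α i ∣ α j) :
    ∃ p : ℕ, p.Prime ∧ ∀ i, ¬IsUnit (α i) → (p : ℤ) ∣ α i := by
  by_cases h : ∃ i, ¬IsUnit (α i)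
  · obtain ⟨m, hm, hmin⟩ := wellFounded_lt.has_min {i | ¬IsUnit (α i)} h
    obtain ⟨p, hp, hpm⟩ := Nat.exists_prime_and_dvd (mt Int.isUnit_iff_natAbs_eq.mpr hm)
    exact ⟨p, hp, fun i hi =>
      (Int.ofNat_dvd_left.mpr hpm).trans (hα m i (not_lt.mp (hmin i hi)))⟩
  · push Not at h
    exact ⟨2, Nat.prime_two, fun i hi => absurd (h i) hi⟩

theorem Submodule.span_range_eq_span_image_of_eq_zero {R M ι : Type*} [Semiring R]
    [AddCommMonoid M] [Module R M] (v : ι → M) (s : Set ι) (hv : ∀ i ∉ s, v i = 0) :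
    span R (range v) = span R (v '' s) := by
  refine le_antisymm (span_le.mpr ?_) (span_mono (image_subset_range v s))
  rintro _ ⟨i, rfl⟩
  by_cases hi : i ∈ s
  · exact subset_span ⟨i, hi, rfl⟩
  · simp [hv i hi]

theorem finrank_le_card_of_span_eq_top {K V ι : Type*} [DivisionRing K] [AddCommGroup V]
    [Module K V] (v : ι → V) (s : Finset ι) (hv : span K (v '' s) = ⊤) :
    Module.finrank K V ≤ s.card := by
  classical
  have := finrank_span_finset_le_card (R := K) (s.image v)
  rw [Finset.coe_image, Set.finrank, hv, finrank_top] at this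
  exact this.trans Finset.card_image_le

theorem le_card_of_span_eq_top_of_dvd {ι : Type*} {d : ℕ} (p : ℕ) [Fact p.Prime]
    (v : ι → Fin d → ℤ) (hv : span ℤ (range v) = ⊤) (s : Finset ι)
    (hs : ∀ i ∉ s, ∀ k, (p : ℤ) ∣ v i k) : d ≤ s.card := by
  let π : (Fin d → ℤ) →ₗ[ℤ] (Fin d → ZMod p) :=
    LinearMap.compLeft (Int.castRingHom (ZMod p)).toIntAlgHom.toLinearMap (Fin d)
  have hπ : Function.Surjective π := ZMod.intCast_surjective.comp_left
  have hspanℤ : span ℤ (range (π ∘ v)) = ⊤ := by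
    rw [range_comp, ← map_span, hv, Submodule.map_top, LinearMap.range_eq_top.mpr hπ]
  have hspan : span (ZMod p) (range (π ∘ v)) = ⊤ := by
    rw [← restrictScalars_eq_top_iff ℤ, eq_top_iff, ← hspanℤ]
    exact span_le_restrictScalars ℤ (ZMod p) _
  rw [span_range_eq_span_image_of_eq_zero (π ∘ v) (s : Set ι) fun i hi => funext fun k =>
    (ZMod.intCast_zmod_eq_zero_iff_dvd _ _).mpr (hs i hi k)] at hspan
  simpa using finrank_le_card_of_span_eq_top _ s hspan

theorem map_funLeft_span_smul_single_eq_top {R ι κ : Type*} [CommSemiring R] [DecidableEq ι]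
    [DecidableEq κ] [Finite κ] (α : ι → R) (f : κ → ι) (hf : f.Injective)
    (hα : ∀ j, IsUnit (α (f j))) :
    map (LinearMap.funLeft R R f) (span R (range fun i => α i • Pi.single i (1 : R))) = ⊤ := by
  rw [map_span, ← range_comp, eq_top_iff, ← (Pi.basisFun R κ).span_eq, span_le]
  rintro _ ⟨j, rfl⟩
  have : LinearMap.funLeft R R f (α (f j) • Pi.single (f j) 1) = α (f j) • Pi.basisFun R κ j := by
    ext k
    simp [LinearMap.funLeft_apply, Pi.single_apply, hf.eq_iff]
  exact (smul_mem_iff_of_isUnit _ (hα j)).mp (this ▸ subset_span ⟨f j, rfl⟩)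

/-- Let `α₁ ∣ α₂ ∣ ⋯ ∣ α_n` in `ℤ` and let
`N = Span_ℤ{α₁·e₁, …, α_n·e_n} ⊆ ℤ^n`.  Then there is a `ℤ`-linear map
`ψ : ℤ^n → ℤ^d` with `ψ(N) = ℤ^d` if and only if
`d ≤ #{i : α_i = 1 or α_i = -1}`. -/
theorem stmt_12 (n d : ℕ) (α : Fin n → ℤ)
    (hchain : ∀ (i : ℕ) (h : i + 1 < n), α ⟨i, Nat.lt_of_succ_lt h⟩ ∣ α ⟨i + 1, h⟩) :
    (∃ ψ : (Fin n → ℤ) →ₗ[ℤ] (Fin d → ℤ),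
        Submodule.map ψ (Submodule.span ℤ
          (Set.range fun i : Fin n => α i • (Pi.single i 1 : Fin n → ℤ))) = ⊤) ↔
      d ≤ (Finset.univ.filter fun i : Fin n => α i = 1 ∨ α i = -1).card := by
  simp only [← Int.isUnit_iff]
  constructor
  · rintro ⟨ψ, hψ⟩
    obtain ⟨p, hp, hpα⟩ := Int.exists_prime_dvd_of_not_isUnit α
      fun i j => dvd_of_le_of_forall_dvd_succ α hchain
    have : Fact p.Prime := ⟨hp⟩
    refine le_card_of_span_eq_top_of_dvd p (fun i => ψ (α i • Pi.single i 1)) ?_ _ ?_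
    · rw [range_comp', ← map_span, hψ]
    · intro i hi k
      rw [map_smul, Pi.smul_apply, smul_eq_mul]
      exact (hpα i (by simpa using hi)).mul_right _
  · intro hd
    obtain ⟨f⟩ : Nonempty (Fin d ↪ {i // IsUnit (α i)}) :=
      Function.Embedding.nonempty_of_card_le (by simpa [Fintype.card_subtype] using hd)
    exact ⟨LinearMap.funLeft ℤ ℤ (Subtype.val ∘ f), map_funLeft_span_smul_single_eq_top α _
      (Subtype.val_injective.comp f.injective) fun j => (f j).2⟩
end

section
/- Let n, d, r ∈ ℕ with r < d, let p be a prime, and let α₁, …, α_n ∈ ℤ be such that p divides α_i for every i > r. Let N := Span_ℤ{α₁·e₁, …, α_n·e_n} ⊆ ℤ^n. Then for every ℤ-linear map ψ : ℤ^n → ℤ^d, the image ψ(N) is a proper submodule of ℤ^d (i.e., ψ(N) ≠ ℤ^d). -/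
/-- Let `r < d`, let `p` be a prime and let `α₁, …, α_n ∈ ℤ` be such that `p ∣ α_i`
for every index `i > r` (in one-based numbering; with zero-based indices `i : Fin n`
this reads `r ≤ i`).  Let `N = Span_ℤ{α₁·e₁, …, α_n·e_n} ⊆ ℤ^n`.  Then for every
`ℤ`-linear map `ψ : ℤ^n → ℤ^d`, the image `ψ(N)` is a proper submodule of `ℤ^d`. -/
theorem stmt_13 (n d r : ℕ) (hrd : r < d) (p : ℕ) (hp : p.Prime)
    (α : Fin n → ℤ) (hα : ∀ i : Fin n, r ≤ (i : ℕ) → (p : ℤ) ∣ α i)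
    (ψ : (Fin n → ℤ) →ₗ[ℤ] (Fin d → ℤ)) :
    Submodule.map ψ (Submodule.span ℤ
      (Set.range fun i : Fin n => α i • (Pi.single i 1 : Fin n → ℤ))) ≠ ⊤ := by
  haveI : Fact p.Prime := ⟨hp⟩
  intro h
  -- reduction mod p
  let π : (Fin d → ℤ) →ₗ[ℤ] (Fin d → ZMod p) :=
    LinearMap.compLeft ((Int.castAddHom (ZMod p)).toIntLinearMap) (Fin d)
  have hπ : Function.Surjective π := fun y =>
    ⟨fun j => (ZMod.intCast_surjective (y j)).choose,
      funext fun j => (ZMod.intCast_surjective (y j)).choose_spec⟩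
  -- images of the generators mod p
  set g : Fin n → (Fin d → ZMod p) := fun i => π (ψ (α i • (Pi.single i 1 : Fin n → ℤ))) with hg
  have hspan : Submodule.span (ZMod p) (Set.range g) = ⊤ := by
    rw [eq_top_iff]
    intro y _
    obtain ⟨x, hx⟩ := hπ y
    have hxN : x ∈ Submodule.map ψ (Submodule.span ℤ
        (Set.range fun i : Fin n => α i • (Pi.single i 1 : Fin n → ℤ))) := h ▸ Submodule.mem_top
    obtain ⟨m, hm, rfl⟩ := hxN
    have : π (ψ m) ∈ Submodule.map (π.comp ψ) (Submodule.span ℤ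
        (Set.range fun i : Fin n => α i • (Pi.single i 1 : Fin n → ℤ))) := ⟨m, hm, rfl⟩
    rw [Submodule.map_span] at this
    have hsub : (π.comp ψ) '' (Set.range fun i : Fin n => α i • (Pi.single i 1 : Fin n → ℤ))
        ⊆ Set.range g := by
      rintro _ ⟨_, ⟨i, rfl⟩, rfl⟩
      exact ⟨i, rfl⟩
    have hle : Submodule.span ℤ ((π.comp ψ) ''
        (Set.range fun i : Fin n => α i • (Pi.single i 1 : Fin n → ℤ)))
        ≤ (Submodule.span (ZMod p) (Set.range g)).restrictScalars ℤ := by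
      refine Submodule.span_le.mpr fun z hz => ?_
      exact Submodule.subset_span (hsub hz)
    rw [← hx]
    exact hle this
  -- generators with index ≥ r vanish mod p
  have hzero : ∀ i : Fin n, r ≤ (i : ℕ) → g i = 0 := by
    intro i hi
    obtain ⟨c, hc⟩ := hα i hi
    have : (α i • (Pi.single i 1 : Fin n → ℤ)) = (p : ℤ) • (c • Pi.single i 1) := by
      rw [smul_smul, ← hc]
    rw [hg]
    simp only [this, map_smul]
    have : ((p : ℤ) : ZMod p) = 0 := by simp
    rw [← Int.cast_smul_eq_zsmul (ZMod p), this, zero_smul]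
  -- so the span is generated by at most r vectors
  let f : Fin r → (Fin d → ZMod p) := fun j => if hj : (j : ℕ) < n then g ⟨j, hj⟩ else 0
  have hsub2 : Set.range g ⊆ insert 0 (Set.range f) := by
    rintro _ ⟨i, rfl⟩
    by_cases hi : (i : ℕ) < r
    · right
      exact ⟨⟨i, hi⟩, by simp [f, i.isLt]⟩
    · left
      exact hzero i (le_of_not_gt hi)
  have htop : Submodule.span (ZMod p) (Set.range f) = ⊤ := by
    rw [eq_top_iff, ← hspan]
    calc Submodule.span (ZMod p) (Set.range g)
        ≤ Submodule.span (ZMod p) (insert 0 (Set.range f)) := Submodule.span_mono hsub2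
      _ = Submodule.span (ZMod p) (Set.range f) := Submodule.span_insert_zero
  classical
  have h1 : Module.finrank (ZMod p) (Fin d → ZMod p) ≤ r := by
    rw [← finrank_top, ← htop]
    refine (finrank_span_le_card _).trans ?_
    have := Fintype.card_range_le f
    rw [Fintype.card_fin] at this
    rwa [Set.toFinset_card]
  have hd : Module.finrank (ZMod p) (Fin d → ZMod p) = d := by simp
  omega
end
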